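/- Let \mathcal{X} be a countable set and let d_1, ..., d_K be distributions on \mathcal{X} that are linearly independent in the real vector space of functions \mathcal{X} \to \mathbb{R}. Then the set \mathfrak{P} of all mixture matrices of distribution decompositions of d_1, ..., d_K, i.e. \mathfrak{P} = \{ P : P right stochastic and there exist distributions f_1,...,f_K on \mathcal{X} with d_i(x) = \sum_{j=1}^K P_{ij} f_j(x) for all i, x \}, is a closed and compact subset of the space of K \times K real matrices. -/

import Mathlib

open scoped BigOperators

/-- A function `f : 𝒳 → ℝ` on a countable set is a distribution if it is nonnegative,
summable, and its sum over `𝒳` equals `1`. -/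
def IsDistribution {𝒳 : Type*} (f : 𝒳 → ℝ) : Prop :=
  (∀ x, 0 ≤ f x) ∧ Summable f ∧ ∑' x, f x = 1

/-- A `K × K` real matrix is right stochastic if all its entries are nonnegative and
each of its rows sums to `1`. -/
def RightStochastic {K : ℕ} (P : Matrix (Fin K) (Fin K) ℝ) : Prop :=
  (∀ i j, 0 ≤ P i j) ∧ ∀ i, ∑ j, P i j = 1

/-!
If `d = P f` with `f ≥ 0` pointwise, linear independence of the `d i` forces `P` to be
invertible, so `f = P⁻¹ d` is automatically summable, with total masses `P⁻¹ 1 = 1`.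
Mixture matrices are therefore exactly the first components of the pairs `(P, f)` with `P`
row stochastic, `0 ≤ f ≤ 1` and `d = P f`. These pairs form a closed subset of a product of
compact boxes (Tychonoff), so their projection is compact, hence closed.
-/

open Matrix Set

section

variable {𝒳 : Type*}

lemma IsDistribution.le_one {f : 𝒳 → ℝ} (hf : IsDistribution f) (x : 𝒳) : f x ≤ 1 :=
  hf.2.2 ▸ hf.2.1.le_tsum x fun y _ => hf.1 y

lemma isDistribution_sum_mul {ι : Type*} [Fintype ι] {d : ι → 𝒳 → ℝ}
    (hd : ∀ i, IsDistribution (d i)) {c : ι → ℝ} (hc : ∑ i, c i = 1)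
    (h0 : ∀ x, 0 ≤ ∑ i, c i * d i x) : IsDistribution fun x => ∑ i, c i * d i x := by
  have hsummable : ∀ i, Summable fun x => c i * d i x := fun i => (hd i).2.1.mul_left (c i)
  refine ⟨h0, summable_sum fun i _ => hsummable i, ?_⟩
  rw [Summable.tsum_finsetSum fun i _ => hsummable i]
  simp only [tsum_mul_left, (hd _).2.2, mul_one, hc]

section

variable {n : Type*} [Fintype n] [DecidableEq n]

theorem Matrix.det_ne_zero_of_linearIndependent {R : Type*} [Field R] {d f : n → 𝒳 → R}
    (hind : LinearIndependent R d) {P : Matrix n n R}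
    (hdf : ∀ x, (fun i => d i x) = P *ᵥ fun j => f j x) : P.det ≠ 0 := by
  intro hdet
  obtain ⟨v, hv0, hvP⟩ := exists_vecMul_eq_zero_iff.mpr hdet
  refine hv0 (funext (Fintype.linearIndependent_iff.mp hind v (funext fun x => ?_)))
  calc (∑ i, v i • d i) x = v ⬝ᵥ fun i => d i x := by simp [dotProduct]
    _ = 0 := by rw [hdf x, dotProduct_mulVec, hvP, zero_dotProduct]

theorem isDistribution_of_eq_mulVec {d f : n → 𝒳 → ℝ} (hd : ∀ i, IsDistribution (d i))
    (hind : LinearIndependent ℝ d) {P : Matrix n n ℝ} (hP : P ∈ rowStochastic ℝ n)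
    (hf0 : 0 ≤ f) (hdf : ∀ x, (fun i => d i x) = P *ᵥ fun j => f j x) (j : n) :
    IsDistribution (f j) := by
  let := P.invertibleOfIsUnitDet (isUnit_iff_ne_zero.2 (det_ne_zero_of_linearIndependent hind hdf))
  have hf : f j = fun x => ∑ i, P⁻¹ j i * d i x :=
    funext fun x => (congrFun (inv_mulVec_eq_vec (hdf x)) j).symm
  have hrow : ∑ i, P⁻¹ j i = 1 := by
    simpa [mulVec, dotProduct] using congrFun (inv_mulVec_eq_vec hP.2.symm) j
  rw [hf]
  exact isDistribution_sum_mul hd hrow fun x => congrFun hf x ▸ hf0 j x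

theorem isClosed_rowStochastic : IsClosed (rowStochastic ℝ n : Set (Matrix n n ℝ)) := by
  show IsClosed ({M : Matrix n n ℝ | ∀ i j, 0 ≤ M i j} ∩ {M | M *ᵥ 1 = 1})
  simp only [ofPred_forall]
  exact (isClosed_iInter fun i => isClosed_iInter fun j =>
      isClosed_le continuous_const (continuous_id.matrix_elem i j)).inter
    (isClosed_eq (continuous_id.matrix_mulVec continuous_const) continuous_const)

theorem isCompact_rowStochastic : IsCompact (rowStochastic ℝ n : Set (Matrix n n ℝ)) :=
  (isCompact_Icc (a := (0 : n → n → ℝ)) (b := 1)).of_isClosed_subset isClosed_rowStochastic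
    fun _ hP => ⟨fun i j => hP.1 i j, fun _ _ => le_one_of_mem_rowStochastic hP⟩

def boundedDecompositions (d : n → 𝒳 → ℝ) : Set (Matrix n n ℝ × (n → 𝒳 → ℝ)) :=
  (rowStochastic ℝ n : Set (Matrix n n ℝ)) ×ˢ Icc 0 1 ∩
    {p | ∀ x, (fun i => d i x) = p.1 *ᵥ fun j => p.2 j x}

theorem isCompact_boundedDecompositions (d : n → 𝒳 → ℝ) :
    IsCompact (boundedDecompositions d) := by
  refine (isCompact_rowStochastic.prod isCompact_Icc).inter_right ?_
  simp only [ofPred_forall]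
  exact isClosed_iInter fun x =>
    isClosed_eq continuous_const <|
      continuous_fst.matrix_mulVec (continuous_pi fun j => (continuous_apply_apply j x).comp
        continuous_snd)

end

def IsMixtureMatrix {K : ℕ} (d : Fin K → 𝒳 → ℝ) (P : Matrix (Fin K) (Fin K) ℝ) : Prop :=
  RightStochastic P ∧ ∃ f : Fin K → 𝒳 → ℝ, (∀ j, IsDistribution (f j)) ∧
    ∀ (i : Fin K) (x : 𝒳), d i x = ∑ j, P i j * f j x

theorem setOf_isMixtureMatrix_eq_image_fst {K : ℕ} {d : Fin K → 𝒳 → ℝ}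
    (hd : ∀ i, IsDistribution (d i)) (hind : LinearIndependent ℝ d) :
    {P | IsMixtureMatrix d P} = Prod.fst '' boundedDecompositions d := by
  ext P
  constructor
  · rintro ⟨hP, f, hf, hdf⟩
    exact ⟨(P, f), ⟨⟨mem_rowStochastic_iff_sum.2 hP, fun j x => (hf j).1 x,
      fun j x => (hf j).le_one x⟩, fun x => funext fun i => hdf i x⟩, rfl⟩
  · rintro ⟨⟨P, f⟩, ⟨⟨hP, hf0, -⟩, hdf⟩, rfl⟩
    exact ⟨mem_rowStochastic_iff_sum.1 hP, f, isDistribution_of_eq_mulVec hd hind hP hf0 hdf,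
      fun i x => congrFun (hdf x) i⟩

end

theorem mixture_matrices_isClosed_isCompact_general
    {𝒳 : Type*} {K : ℕ}
    (d : Fin K → 𝒳 → ℝ) (hd : ∀ i, IsDistribution (d i))
    (hind : LinearIndependent ℝ d) :
    IsClosed {P : Matrix (Fin K) (Fin K) ℝ | RightStochastic P ∧
        ∃ f : Fin K → 𝒳 → ℝ, (∀ j, IsDistribution (f j)) ∧
          ∀ (i : Fin K) (x : 𝒳), d i x = ∑ j, P i j * f j x} ∧
      IsCompact {P : Matrix (Fin K) (Fin K) ℝ | RightStochastic P ∧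
        ∃ f : Fin K → 𝒳 → ℝ, (∀ j, IsDistribution (f j)) ∧
          ∀ (i : Fin K) (x : 𝒳), d i x = ∑ j, P i j * f j x} := by
  have hcompact : IsCompact {P | IsMixtureMatrix d P} := by
    rw [setOf_isMixtureMatrix_eq_image_fst hd hind]
    exact (isCompact_boundedDecompositions d).image continuous_fst
  exact ⟨hcompact.isClosed, hcompact⟩

/-- For linearly independent source distributions, the set of all mixture matrices of
distribution decompositions is a closed and compact subset of the space of `K × K` real
matrices. -/
theorem mixture_matrices_isClosed_isCompact
    {𝒳 : Type*} [Countable 𝒳] {K : ℕ}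
    (d : Fin K → 𝒳 → ℝ) (hd : ∀ i, IsDistribution (d i))
    (hind : LinearIndependent ℝ d) :
    IsClosed {P : Matrix (Fin K) (Fin K) ℝ | RightStochastic P ∧
        ∃ f : Fin K → 𝒳 → ℝ, (∀ j, IsDistribution (f j)) ∧
          ∀ (i : Fin K) (x : 𝒳), d i x = ∑ j, P i j * f j x} ∧
      IsCompact {P : Matrix (Fin K) (Fin K) ℝ | RightStochastic P ∧
        ∃ f : Fin K → 𝒳 → ℝ, (∀ j, IsDistribution (f j)) ∧
          ∀ (i : Fin K) (x : 𝒳), d i x = ∑ j, P i j * f j x} :=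
  mixture_matrices_isClosed_isCompact_general d hd hind
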